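/- (Almost-sure version of the overall bound.) Fix L ≥ 2 and strictly positive reals f_0, ..., f_{L−1} with ∑_{ℓ=0}^{L−1} f_ℓ = 1. Let X_1, X_2, ... be i.i.d. random variables taking values in {0, 1, ..., L−1} with P(X_n = ℓ) = f_ℓ, and for each N let x^{(N)} = (X_1, ..., X_N). For each 1 ≤ ℓ ≤ L−1 let M_ℓ = ⌈(ln 2)·(1 − ∑_{m=1}^{ℓ} f_m)/f_ℓ⌉ and let B_ℓ(N) be the total number of bits used to Golomb-encode with parameter M_ℓ the run lengths of the restricted support vector s_ℓ[I_ℓ] of x^{(N)}. Then, almost surely, limsup_{N→∞} (1/N)·∑_{ℓ=1}^{L−1} B_ℓ(N) ≤ H(f) + C(f), where H(f) = −∑_{ℓ=0}^{L−1} f_ℓ log₂ f_ℓ and C(f) = 2.914·(1 − f_0) + f_0 log₂ f_0 + ∑_{ℓ=1}^{L−1} f_ℓ log₂(1 − ∑_{m=1}^{ℓ−1} f_m). -/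

import Mathlib

/-- The run lengths of zeros of a binary string: for each `true` (a "one"), in
order, the number of consecutive `false`s ("zeros") immediately preceding it.
The trailing run of zeros after the last one is not recorded. -/
def runLengths : List Bool → List ℕ
  | [] => []
  | b :: rest =>
    if b then 0 :: runLengths rest
    else
      match runLengths rest with
      | [] => []
      | r :: rs => (r + 1) :: rs

/-- The index sets, as sorted lists: `I₁ = (1,…,N)` and
`I_{ℓ+1} = I_ℓ \ {n : x_n = ℓ}` for `ℓ ≥ 1`. -/
def idxList (N : ℕ) (x : Fin N → ℕ) : ℕ → List (Fin N)
  | 0 => List.finRange N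
  | ℓ + 1 =>
    if ℓ = 0 then List.finRange N
    else (idxList N x ℓ).filter (fun n => decide (x n ≠ ℓ))

/-- The restricted support vector `s_ℓ[I_ℓ]`: the binary string whose `i`-th
entry is `true` iff the `i`-th smallest index `n` in `I_ℓ` satisfies `x_n = ℓ`. -/
def supportList (N : ℕ) (x : Fin N → ℕ) (ℓ : ℕ) : List Bool :=
  (idxList N x ℓ).map (fun n => decide (x n = ℓ))

/-- Total number of bits used to Golomb-encode a list of run lengths with
parameter `M`: each `r` costs `⌊r/M⌋ + 1` bits (unary quotient) plus
`⌊log₂ M⌋ + 1` bits (remainder). -/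
def golombBits (M : ℕ) (rls : List ℕ) : ℕ :=
  (rls.map (fun r => r / M + 1 + Nat.log 2 M + 1)).sum

lemma runLengths_sum_le (s : List Bool) : (runLengths s).sum ≤ s.count false := by
  induction s with
  | nil => simp [runLengths]
  | cons b rest ih =>
    cases b
    · simp only [runLengths]
      cases h : runLengths rest with
      | nil => simp [List.count_cons]
      | cons r rs =>
        rw [h] at ih
        simp only [List.sum_cons, List.count_cons] at *
        simp
        omega
    · simp only [runLengths, if_pos rfl, List.sum_cons, List.count_cons]
      simpa using ih

lemma runLengths_length_le (s : List Bool) : (runLengths s).length ≤ s.count true := by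
  induction s with
  | nil => simp [runLengths]
  | cons b rest ih =>
    cases b
    · simp only [runLengths]
      cases h : runLengths rest with
      | nil => simp [List.count_cons]
      | cons r rs =>
        rw [h] at ih
        simp only [List.length_cons, List.count_cons] at *
        simpa using ih
    · simp only [runLengths, if_pos rfl, List.length_cons, List.count_cons]
      simpa using ih

lemma sum_div_le (M : ℕ) (l : List ℕ) : (l.map (fun r => r / M)).sum ≤ l.sum / M := by
  induction l with
  | nil => simp
  | cons r rs ih =>
    simp only [List.map_cons, List.sum_cons]
    calc r / M + (rs.map (fun r => r / M)).sum ≤ r / M + rs.sum / M := by omega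
      _ ≤ (r + rs.sum) / M := Nat.add_div_le_add_div _ _ _

lemma golombBits_le (M : ℕ) (s : List Bool) :
    golombBits M (runLengths s) ≤ s.count false / M + s.count true * (2 + Nat.log 2 M) := by
  unfold golombBits
  have h1 : ((runLengths s).map (fun r => r / M + 1 + Nat.log 2 M + 1)).sum
      = ((runLengths s).map (fun r => r / M)).sum + (runLengths s).length * (2 + Nat.log 2 M) := by
    induction runLengths s with
    | nil => simp
    | cons r rs ih => simp [ih]; ring
  rw [h1]
  have h2 := sum_div_le M (runLengths s)
  have h3 := runLengths_sum_le s
  have h4 := runLengths_length_le s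
  have h5 : (runLengths s).sum / M ≤ s.count false / M := Nat.div_le_div_right h3
  have h6 : (runLengths s).length * (2 + Nat.log 2 M) ≤ s.count true * (2 + Nat.log 2 M) :=
    Nat.mul_le_mul_right _ h4
  omega

lemma countP_finRange {N : ℕ} (p : Fin N → Bool) :
    (List.finRange N).countP p = ∑ i : Fin N, if p i then 1 else 0 := by
  induction N with
  | zero => simp
  | succ n ih =>
    rw [List.finRange_succ, List.countP_cons, List.countP_map, Fin.sum_univ_succ,
      ih (p ∘ Fin.succ)]
    by_cases h : p 0 <;> simp [h, Function.comp] <;> omega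

lemma idxList_eq {N : ℕ} (x : Fin N → ℕ) {ℓ : ℕ} (hl : 1 ≤ ℓ) :
    idxList N x ℓ = (List.finRange N).filter (fun n => decide (x n = 0 ∨ ℓ ≤ x n)) := by
  induction ℓ with
  | zero => omega
  | succ l ih =>
    rcases Nat.eq_or_lt_of_le hl with h1 | h2
    · -- l = 0
      have : l = 0 := by omega
      subst this
      show idxList N x 1 = _
      rw [show idxList N x 1 = List.finRange N from rfl]
      symm
      apply List.filter_eq_self.2
      intro a _
      simp only [decide_eq_true_eq]
      omega
    · have hl1 : 1 ≤ l := by omega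
      show idxList N x (l + 1) = _
      rw [show idxList N x (l+1) = (idxList N x l).filter (fun n => decide (x n ≠ l)) by
        conv_lhs => rw [idxList]
        rw [if_neg (by omega : ¬ l = 0)]]
      rw [ih hl1, List.filter_filter]
      apply List.filter_congr
      intro a _
      simp only [decide_eq_true_eq, Bool.and_eq_true, ne_eq]
      rw [Bool.eq_iff_iff]
      simp only [Bool.and_eq_true, decide_eq_true_eq]
      omega

lemma count_true_supportList {N : ℕ} (x : Fin N → ℕ) {ℓ : ℕ} (hl : 1 ≤ ℓ) :
    (supportList N x ℓ).count true = (List.finRange N).countP (fun n => decide (x n = ℓ)) := by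
  unfold supportList
  rw [idxList_eq x hl]
  rw [List.count_eq_countP, List.countP_map, List.countP_filter]
  apply List.countP_congr
  intro a _
  simp only [Function.comp, decide_eq_true_eq, Bool.and_eq_true]
  rw [Bool.eq_iff_iff]
  simp only [Bool.and_eq_true, decide_eq_true_eq, beq_iff_eq, iff_true]
  omega

lemma count_false_supportList {N : ℕ} (x : Fin N → ℕ) {ℓ : ℕ} (hl : 1 ≤ ℓ) :
    (supportList N x ℓ).count false
      = (List.finRange N).countP (fun n => decide (x n = 0 ∨ ℓ + 1 ≤ x n)) := by
  unfold supportList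
  rw [idxList_eq x hl]
  rw [List.count_eq_countP, List.countP_map, List.countP_filter]
  apply List.countP_congr
  intro a _
  simp only [Function.comp, decide_eq_true_eq, Bool.and_eq_true]
  rw [Bool.eq_iff_iff]
  simp only [Bool.and_eq_true, decide_eq_true_eq, beq_iff_eq, iff_false,
    decide_eq_true_eq, Bool.not_eq_true', decide_eq_false_iff_not, iff_true]
  omega

lemma countP_finRange_cast {N : ℕ} (q : ℕ → Prop) [DecidablePred q] :
    (((List.finRange N).countP (fun n : Fin N => decide (q n.val))) : ℝ)
      = ∑ i ∈ Finset.range N, if q i then (1:ℝ) else 0 := by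
  rw [countP_finRange]
  rw [← Fin.sum_univ_eq_sum_range (fun i => if q i then (1:ℝ) else 0)]
  push_cast
  apply Finset.sum_congr rfl
  intro i _
  by_cases h : q i.val <;> simp [h]

lemma key_numeric : Real.log (Real.log 2) ≤ 0.914 * Real.log 2 - 1 := by
  have c0 : (0.6931471803 : ℝ) < Real.log 2 := Real.log_two_gt_d9
  have c1 : Real.log 2 < 0.6931471808 := Real.log_two_lt_d9
  have h1 : Real.log (Real.log 2) ≤ Real.log 0.6931471808 :=
    Real.log_le_log (by positivity) c1.le
  have h2 : Real.log (0.6931471808 : ℝ) ≤ -(0.3664634772058 : ℝ) := by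
    rw [Real.log_le_iff_le_exp (by norm_num)]
    have hexp : Real.exp (0.3664634772058 : ℝ) ≤
        (∑ m ∈ Finset.range 7, (0.3664634772058 : ℝ) ^ m / m.factorial) +
          (0.3664634772058 : ℝ) ^ 7 * (7 + 1) / ((7 : ℕ).factorial * 7) := by
      exact_mod_cast Real.exp_bound' (by norm_num) (by norm_num) (by norm_num)
    have hpos := Real.exp_pos (0.3664634772058 : ℝ)
    rw [Real.exp_neg, le_inv_comm₀ (by norm_num) hpos]
    calc Real.exp (0.3664634772058 : ℝ) ≤ _ := hexp
      _ ≤ (0.6931471808 : ℝ)⁻¹ := by norm_num [Finset.sum_range_succ, Nat.factorial]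
  nlinarith [h1, h2, c0]

set_option maxHeartbeats 1000000 in
/-- Core analytic inequality: if `k = ⌈(ln 2)·u⌉` then
`u/k + ⌊log₂ k⌋ ≤ log₂(1+u) + 0.914`. -/
lemma golomb_core {u : ℝ} (hu : 0 < u) {k : ℕ} (hk : 1 ≤ k)
    (hk1 : (k : ℝ) - 1 < Real.log 2 * u) (hk2 : Real.log 2 * u ≤ k) :
    u / k + (Nat.log 2 k : ℝ) ≤ Real.log (1 + u) / Real.log 2 + 0.914 := by
  set c : ℝ := Real.log 2 with hc
  have c0 : (0.6931471803 : ℝ) < c := Real.log_two_gt_d9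
  have c1 : c < 0.6931471808 := Real.log_two_lt_d9
  have hcpos : 0 < c := by linarith
  have hKey : 1 + Real.log c ≤ 0.914 * c := by linarith [key_numeric]
  have h1u : (0:ℝ) < 1 + u := by linarith
  have hL : Real.log (1 + u) ≥ 1 - (1 + u)⁻¹ := Real.one_sub_inv_le_log_of_pos h1u
  clear_value c
  rcases eq_or_lt_of_le hk with hk1' | hk2'
  · -- k = 1
    have hkk : k = 1 := hk1'.symm
    subst hkk
    simp only [Nat.cast_one, Nat.log_one_right, Nat.cast_zero, add_zero, div_one]
    have hcu : c * u ≤ 1 := by exact_mod_cast hk2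
    have hfrac : 1 - (1 + u)⁻¹ = u / (1 + u) := by field_simp; ring
    have h2 : u / (1 + u) ≥ c * u / (c + 1) := by
      rw [ge_iff_le, div_le_div_iff₀ (by positivity) h1u]
      nlinarith
    have h3 : c * u - c * u / (c + 1) = c * u * c / (c + 1) := by field_simp; ring
    have h4 : c * u * c / (c + 1) ≤ c / (c + 1) := by
      apply div_le_div_of_nonneg_right ?_ (by positivity) |>.trans_eq rfl
      · nlinarith
    have h5 : c / (c + 1) ≤ 0.914 * c := by
      rw [div_le_iff₀ (by positivity)]
      nlinarith
    rw [ge_iff_le, hfrac] at hL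
    have hmain : u - 0.914 ≤ Real.log (1 + u) / c := by
      rw [le_div_iff₀ hcpos]
      nlinarith
    linarith
  · -- k ≥ 2
    have hk2n : 2 ≤ k := hk2'
    set j : ℕ := Nat.log 2 k with hj
    have hpowle : (2:ℕ) ^ j ≤ k := Nat.pow_log_le_self 2 (by omega)
    clear_value j
    set K : ℝ := (k : ℝ) with hK
    have hK2 : (2:ℝ) ≤ K := by rw [hK]; exact_mod_cast hk2n
    clear_value K
    have hcK : (0:ℝ) < c + K := by linarith
    have hcK1 : (0:ℝ) < c + K - 1 := by linarith
    -- step A : log (1+u) ≥ log ((c+K-1)/c) + (c*u - (K-1))/(c+K)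
    have hA : Real.log (1 + u) ≥ Real.log ((c + K - 1)/c) + (c*u - (K-1))/(c+K) := by
      have hw : (0:ℝ) < (1+u)*c/(c+K-1) := by positivity
      have hlog1 : Real.log ((1+u)*c/(c+K-1)) ≥ 1 - ((1+u)*c/(c+K-1))⁻¹ :=
        Real.one_sub_inv_le_log_of_pos hw
      have hsplit : Real.log ((1+u)*c/(c+K-1)) =
          Real.log (1+u) - Real.log ((c+K-1)/c) := by
        rw [Real.log_div (by positivity) (by positivity), Real.log_mul (by positivity)
          (ne_of_gt hcpos), Real.log_div (by positivity) (ne_of_gt hcpos)]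
        ring
      have hinv : ((1+u)*c/(c+K-1))⁻¹ = (c+K-1)/((1+u)*c) := by
        rw [inv_div]
      rw [hsplit, hinv] at hlog1
      have hbound : 1 - (c+K-1)/((1+u)*c) ≥ (c*u - (K-1))/(c+K) := by
        have he : 1 - (c+K-1)/((1+u)*c) = (c*u - (K-1))/((1+u)*c) := by
          field_simp
          ring
        rw [he, ge_iff_le, div_le_div_iff₀ hcK (by positivity)]
        nlinarith
      linarith
    -- step C : c * j ≤ log (c+K-1) + 1/(c+K)
    have hC : c * (j:ℝ) ≤ Real.log (c + K - 1) + 1/(c+K) := by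
      rcases eq_or_lt_of_le hpowle with heq | hlt
      · -- k = 2^j
        have hP : ((2:ℝ))^j = K := by rw [hK, ← heq]; push_cast; ring
        have hlogs : Real.log K - Real.log (c + K - 1) ≤ (1-c)/(c+K-1) := by
          have h2' : Real.log (K/(c+K-1)) ≤ K/(c+K-1) - 1 :=
            Real.log_le_sub_one_of_pos (by positivity)
          rw [Real.log_div (by positivity) (by positivity)] at h2'
          have he2 : K/(c+K-1) - 1 = (1-c)/(c+K-1) := by
            field_simp
            ring
          rw [he2] at h2'
          linarith
        have hfr : (1-c)/(c+K-1) ≤ 1/(c+K) := by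
          rw [div_le_div_iff₀ hcK1 hcK]
          nlinarith
        have hKlog : c * (j:ℝ) = Real.log K := by rw [← hP, Real.log_pow, ← hc]; ring
        linarith
      · -- 2^j < k
        have hle : ((2:ℝ))^j ≤ K - 1 := by
          have h' : (2:ℕ)^j + 1 ≤ k := hlt
          have h'' := (Nat.cast_le (α := ℝ)).2 h'
          rw [hK]; push_cast at h'' ⊢; linarith
        have hlogK : Real.log ((2:ℝ)^j) ≤ Real.log (c+K-1) :=
          Real.log_le_log (by positivity) (by linarith)
        rw [Real.log_pow, ← hc] at hlogK
        have hposf : 0 < 1/(c+K) := by positivity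
        linarith [hlogK]
    -- assemble
    have hBsplit : Real.log ((c+K-1)/c) = Real.log (c+K-1) - Real.log c :=
      Real.log_div (by positivity) (ne_of_gt hcpos)
    have hdiff : (c*u - (K-1))/(c+K) - 1/(c+K) = (c*u - K)/(c+K) := by
      rw [div_sub_div_same]; ring_nf
    rw [hBsplit] at hA
    have hstep : Real.log (1+u) ≥ c*(j:ℝ) - Real.log c + (c*u - K)/(c+K) := by
      linarith [hA, hC, hdiff]
    have hfin : c * u / K ≤ 1 + (c*u - K)/(c+K) := by
      have h1 : 1 + (c*u - K)/(c+K) = (c + K + (c*u - K))/(c+K) :=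
        one_add_div (ne_of_gt hcK)
      rw [h1, div_le_div_iff₀ (by linarith) hcK]
      nlinarith [mul_nonneg hcpos.le (sub_nonneg.2 hk2)]
    have hT : (u / K + (j:ℝ) - 0.914) * c = c*u/K + c*(j:ℝ) - 0.914*c := by ring
    have hmain : u / K + (j:ℝ) - 0.914 ≤ Real.log (1 + u) / c := by
      rw [le_div_iff₀ hcpos, hT]
      linarith
    linarith

/-- Per-symbol analytic bound in the form used in the main theorem. -/
lemma golomb_term {f z : ℝ} (hf : 0 < f) (hz : 0 < z) :
    z / ((⌈Real.log 2 * z / f⌉).toNat : ℝ)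
      + f * (2 + (Nat.log 2 (⌈Real.log 2 * z / f⌉).toNat : ℝ))
    ≤ f * Real.logb 2 (z + f) - f * Real.logb 2 f + 2.914 * f := by
  have hcpos : (0:ℝ) < Real.log 2 := Real.log_pos (by norm_num)
  have hx : (0:ℝ) < Real.log 2 * z / f := by positivity
  set M : ℕ := (⌈Real.log 2 * z / f⌉).toNat with hM
  have hceil : (1:ℤ) ≤ ⌈Real.log 2 * z / f⌉ := by
    exact_mod_cast Int.ceil_pos.2 hx
  have hM1 : 1 ≤ M := by
    rw [hM]; omega
  have hMcast : (M : ℝ) = (⌈Real.log 2 * z / f⌉ : ℤ) := by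
    have h' : (M:ℤ) = ⌈Real.log 2 * z / f⌉ := by
      rw [hM]; exact Int.toNat_of_nonneg (by omega)
    exact_mod_cast congrArg (Int.cast : ℤ → ℝ) h'
  have hu : 0 < z / f := by positivity
  have hcu : Real.log 2 * (z / f) = Real.log 2 * z / f := by ring
  have hk1 : (M : ℝ) - 1 < Real.log 2 * (z / f) := by
    rw [hMcast, hcu]
    linarith [Int.ceil_lt_add_one (Real.log 2 * z / f)]
  have hk2 : Real.log 2 * (z / f) ≤ (M : ℝ) := by
    rw [hMcast, hcu]; exact Int.le_ceil _
  have hcore := golomb_core hu hM1 hk1 hk2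
  have hlog : Real.log (1 + z / f) = Real.log (z + f) - Real.log f := by
    have h1 : 1 + z / f = (z + f) / f := by field_simp; ring
    rw [h1, Real.log_div (by positivity) (ne_of_gt hf)]
  have hMpos : (0:ℝ) < (M:ℝ) := by exact_mod_cast hM1
  have hzM : z / (M:ℝ) = f * ((z/f) / M) := by field_simp
  have hmul := mul_le_mul_of_nonneg_left hcore hf.le
  rw [hlog] at hmul
  have hexpand : f * ((Real.log (z+f) - Real.log f) / Real.log 2 + 0.914)
      = f * (Real.log (z+f) / Real.log 2) - f * (Real.log f / Real.log 2) + 0.914 * f := by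
    ring
  have hexp : f * (z/f/(M:ℝ) + (Nat.log 2 M : ℝ))
      = f * (z/f/(M:ℝ)) + f * (Nat.log 2 M : ℝ) := by ring
  rw [Real.logb, Real.logb, hzM]
  linarith [hmul, hexpand, hexp]

open MeasureTheory ProbabilityTheory

/-- **almost-sure overall bound.**  Let `X₁, X₂, …` be i.i.d.
random variables on `{0,…,L−1}` with `P(Xₙ = ℓ) = f_ℓ`, where `f` is a strictly
positive PMF and `L ≥ 2`.  With Golomb parameters
`M_ℓ = ⌈(ln 2)(1 − ∑_{m=1}^ℓ f_m)/f_ℓ⌉` and `B_ℓ(N)` the number of bits used to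
encode the run lengths of `s_ℓ[I_ℓ]` of `x⁽ᴺ⁾ = (X₁,…,X_N)`, almost surely
`limsup_N (1/N)·∑_{ℓ=1}^{L−1} B_ℓ(N) ≤ H(f) + C(f)`. -/
theorem almost_sure_overall_bound
    {Ω : Type*} [MeasurableSpace Ω] (μ : Measure Ω) [IsProbabilityMeasure μ]
    (L : ℕ) (hL : 2 ≤ L)
    (f : ℕ → ℝ) (hf : ∀ m < L, 0 < f m)
    (hsum : ∑ m ∈ Finset.range L, f m = 1)
    (X : ℕ → Ω → ℕ) (hXmeas : ∀ n, Measurable (X n))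
    (hXrange : ∀ n ω, X n ω < L)
    (hindep : iIndepFun X μ)
    (hdist : ∀ n, ∀ ℓ < L, μ {ω | X n ω = ℓ} = ENNReal.ofReal (f ℓ)) :
    ∀ᵐ ω ∂μ,
      Filter.limsup
          (fun N =>
            ((∑ ℓ ∈ Finset.Ico 1 L,
                golombBits
                  (⌈Real.log 2 * (1 - ∑ m ∈ Finset.Icc 1 ℓ, f m) / f ℓ⌉.toNat)
                  (runLengths
                    (supportList N (fun n : Fin N => X n ω) ℓ)) : ℕ) : ℝ) / N)
          Filter.atTop
        ≤ (-∑ ℓ ∈ Finset.range L, f ℓ * Real.logb 2 (f ℓ))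
          + (2.914 * (1 - f 0) + f 0 * Real.logb 2 (f 0)
              + ∑ ℓ ∈ Finset.Ico 1 L,
                  f ℓ * Real.logb 2 (1 - ∑ m ∈ Finset.Ico 1 ℓ, f m)) := by
  classical
  have hLpos : 0 < L := by omega
  have hg : ∀ m : ℕ, Measurable (fun a : ℕ => if a = m then (1:ℝ) else 0) :=
    fun m => measurable_of_countable _
  -- all X n have the same distribution
  have hmapX : ∀ n, Measure.map (X n) μ = Measure.map (X 0) μ := by
    intro n
    apply MeasureTheory.Measure.ext_of_singleton
    intro a
    rw [Measure.map_apply (hXmeas n) (measurableSet_singleton a),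
        Measure.map_apply (hXmeas 0) (measurableSet_singleton a)]
    by_cases ha : a < L
    · have h1 : X n ⁻¹' {a} = {ω | X n ω = a} := rfl
      have h2 : X 0 ⁻¹' {a} = {ω | X 0 ω = a} := rfl
      rw [h1, h2, hdist n a ha, hdist 0 a ha]
    · have h1 : X n ⁻¹' {a} = ∅ := by
        ext ω; simp only [Set.mem_preimage, Set.mem_singleton_iff, Set.mem_empty_iff_false,
          iff_false]
        exact fun h => ha (h ▸ hXrange n ω)
      have h2 : X 0 ⁻¹' {a} = ∅ := by
        ext ω; simp only [Set.mem_preimage, Set.mem_singleton_iff, Set.mem_empty_iff_false,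
          iff_false]
        exact fun h => ha (h ▸ hXrange 0 ω)
      rw [h1, h2]
  set Y : ℕ → ℕ → Ω → ℝ := fun m i ω => if X i ω = m then 1 else 0 with hYdef
  -- strong law of large numbers for each symbol indicator
  have hslln : ∀ m, m < L → ∀ᵐ ω ∂μ,
      Filter.Tendsto (fun N : ℕ =>
        (∑ i ∈ Finset.range N, if X i ω = m then (1:ℝ) else 0) / N)
        Filter.atTop (nhds (f m)) := by
    intro m hm
    have hind : Y m 0 = Set.indicator (X 0 ⁻¹' {m}) (fun _ => (1:ℝ)) := by
      funext ω
      by_cases h : X 0 ω = m <;> simp [Y, h, Set.indicator_apply]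
    have hintY : Integrable (Y m 0) μ := by
      rw [hind]
      exact (integrable_const (1:ℝ)).indicator (hXmeas 0 (measurableSet_singleton m))
    have hEY : ∫ ω, Y m 0 ω ∂μ = f m := by
      rw [hind, MeasureTheory.integral_indicator_const (1:ℝ)
        (hXmeas 0 (measurableSet_singleton m))]
      have hpre : X 0 ⁻¹' {m} = {ω | X 0 ω = m} := rfl
      rw [hpre, measureReal_def, hdist 0 m hm]
      simp [ENNReal.toReal_ofReal (hf m hm).le]
    have hpind : Pairwise (Function.onFun (IndepFun · · μ) (Y m)) := by
      intro i j hij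
      exact (hindep.indepFun hij).comp (hg m) (hg m)
    have hidentY : ∀ i, IdentDistrib (Y m i) (Y m 0) μ μ := by
      intro i
      have hX : IdentDistrib (X i) (X 0) μ μ :=
        ⟨(hXmeas i).aemeasurable, (hXmeas 0).aemeasurable, hmapX i⟩
      exact hX.comp (hg m)
    have := ProbabilityTheory.strong_law_ae (Y m) hintY hpind hidentY
    rw [hEY] at this
    filter_upwards [this] with ω hω
    have heq : (fun N : ℕ => (∑ i ∈ Finset.range N, if X i ω = m then (1:ℝ) else 0) / N)
        = fun N : ℕ => (N:ℝ)⁻¹ • ∑ i ∈ Finset.range N, Y m i ω := by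
      funext N; rw [smul_eq_mul, inv_mul_eq_div]
    rw [heq]; exact hω
  have hae : ∀ᵐ ω ∂μ, ∀ m, m < L →
      Filter.Tendsto (fun N : ℕ =>
        (∑ i ∈ Finset.range N, if X i ω = m then (1:ℝ) else 0) / N)
        Filter.atTop (nhds (f m)) := by
    rw [MeasureTheory.ae_all_iff]
    intro m
    by_cases hm : m < L
    · exact (hslln m hm).mono fun ω h _ => h
    · exact MeasureTheory.ae_of_all μ fun ω hm' => absurd hm' hm
  -- the deterministic part
  filter_upwards [hae] with ω hω
  set T : ℕ → ℕ → ℝ := fun m N => ∑ i ∈ Finset.range N, if X i ω = m then (1:ℝ) else 0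
    with hTdef
  have hT : ∀ m, m < L → Filter.Tendsto (fun N => T m N / N) Filter.atTop (nhds (f m)) := hω
  -- positivity of "zero fraction"
  have hfpos : ∀ ℓ, 1 ≤ ℓ → ℓ < L → 0 < f ℓ := fun ℓ _ h2 => hf ℓ h2
  have hIco : ∑ m ∈ Finset.Ico 1 L, f m = 1 - f 0 := by
    have h0 : ∑ m ∈ Finset.range L, f m = f 0 + ∑ m ∈ Finset.Ico 1 L, f m := by
      rw [Finset.range_eq_Ico, Finset.sum_eq_sum_Ico_succ_bot hLpos]
    linarith [hsum, h0]
  have hz : ∀ ℓ, 1 ≤ ℓ → ℓ < L → 0 < 1 - ∑ m ∈ Finset.Icc 1 ℓ, f m := by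
    intro ℓ h1 h2
    have hsub : Finset.Icc 1 ℓ ⊆ Finset.Ico 1 L := by
      intro m hm
      simp only [Finset.mem_Icc, Finset.mem_Ico] at *
      omega
    have hle : ∑ m ∈ Finset.Icc 1 ℓ, f m ≤ ∑ m ∈ Finset.Ico 1 L, f m := by
      apply Finset.sum_le_sum_of_subset_of_nonneg hsub
      intro m hm _
      exact (hf m (Finset.mem_Ico.1 hm).2).le
    have := hf 0 hLpos
    linarith [hIco ▸ hle]
  -- notation for the Golomb parameters
  set M : ℕ → ℕ := fun ℓ => (⌈Real.log 2 * (1 - ∑ m ∈ Finset.Icc 1 ℓ, f m) / f ℓ⌉).toNat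
    with hMdef
  have hM1 : ∀ ℓ, 1 ≤ ℓ → ℓ < L → 1 ≤ M ℓ := by
    intro ℓ h1 h2
    have hx : (0:ℝ) < Real.log 2 * (1 - ∑ m ∈ Finset.Icc 1 ℓ, f m) / f ℓ := by
      have := hz ℓ h1 h2
      have := hfpos ℓ h1 h2
      have hlog : (0:ℝ) < Real.log 2 := Real.log_pos (by norm_num)
      positivity
    have : (1:ℤ) ≤ ⌈Real.log 2 * (1 - ∑ m ∈ Finset.Icc 1 ℓ, f m) / f ℓ⌉ :=
      Int.ceil_pos.2 hx
    simp only [hMdef]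
    omega
  -- counting identity: real cast of the "count false" equals N - ∑ T m N
  have hZcount : ∀ ℓ, ∀ N : ℕ,
      (((List.finRange N).countP
        (fun n : Fin N => decide (X n ω = 0 ∨ ℓ + 1 ≤ X n ω)) : ℕ) : ℝ)
        = (N:ℝ) - ∑ m ∈ Finset.Icc 1 ℓ, T m N := by
    intro ℓ N
    rw [countP_finRange_cast (q := fun i => X i ω = 0 ∨ ℓ + 1 ≤ X i ω)]
    rw [eq_sub_iff_add_eq, hTdef]
    rw [Finset.sum_comm (s := Finset.Icc 1 ℓ)]
    rw [← Finset.sum_add_distrib]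
    have : ∀ i ∈ Finset.range N,
        ((if X i ω = 0 ∨ ℓ + 1 ≤ X i ω then (1:ℝ) else 0)
          + ∑ m ∈ Finset.Icc 1 ℓ, if X i ω = m then (1:ℝ) else 0) = 1 := by
      intro i _
      have hsum_ite : ∑ m ∈ Finset.Icc 1 ℓ, (if X i ω = m then (1:ℝ) else 0)
          = if X i ω ∈ Finset.Icc 1 ℓ then (1:ℝ) else 0 :=
        Finset.sum_ite_eq (Finset.Icc 1 ℓ) (X i ω) (fun _ => (1:ℝ))
      rw [hsum_ite]
      by_cases hmem : X i ω ∈ Finset.Icc 1 ℓ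
      · rw [if_pos hmem, if_neg]
        · norm_num
        · simp only [Finset.mem_Icc] at hmem
          omega
      · rw [if_neg hmem, if_pos]
        · norm_num
        · simp only [Finset.mem_Icc] at hmem
          omega
    rw [Finset.sum_congr rfl this]
    simp
  have hTcount : ∀ ℓ : ℕ, ∀ N : ℕ,
      (((List.finRange N).countP (fun n : Fin N => decide (X n ω = ℓ)) : ℕ) : ℝ) = T ℓ N :=
    fun ℓ N => countP_finRange_cast (q := fun i => X i ω = ℓ)
  -- per-ℓ per-N real bound
  have hbound : ∀ ℓ, 1 ≤ ℓ → ℓ < L → ∀ N : ℕ,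
      ((golombBits (M ℓ) (runLengths (supportList N (fun n : Fin N => X n ω) ℓ)) : ℕ) : ℝ)
        ≤ ((N:ℝ) - ∑ m ∈ Finset.Icc 1 ℓ, T m N) / M ℓ
          + T ℓ N * (2 + (Nat.log 2 (M ℓ) : ℝ)) := by
    intro ℓ h1 h2 N
    have hb := golombBits_le (M ℓ) (supportList N (fun n : Fin N => X n ω) ℓ)
    rw [count_true_supportList _ h1, count_false_supportList _ h1] at hb
    have hcast := (Nat.cast_le (α := ℝ)).2 hb
    push_cast at hcast
    refine hcast.trans ?_
    have hd : ((((List.finRange N).countP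
          (fun n : Fin N => decide (X n ω = 0 ∨ ℓ + 1 ≤ X n ω))) / M ℓ : ℕ) : ℝ)
        ≤ (((List.finRange N).countP
          (fun n : Fin N => decide (X n ω = 0 ∨ ℓ + 1 ≤ X n ω)) : ℕ) : ℝ) / (M ℓ : ℝ) :=
      Nat.cast_div_le
    rw [hZcount ℓ N] at hd
    rw [hTcount ℓ N]
    exact add_le_add hd le_rfl
  -- limit sequence
  set b : ℕ → ℝ := fun N => ∑ ℓ ∈ Finset.Ico 1 L,
      ((1 - ∑ m ∈ Finset.Icc 1 ℓ, T m N / N) / M ℓ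
        + (T ℓ N / N) * (2 + (Nat.log 2 (M ℓ) : ℝ))) with hbdef
  have hab : ∀ N : ℕ, 1 ≤ N →
      ((∑ ℓ ∈ Finset.Ico 1 L,
        golombBits (M ℓ) (runLengths (supportList N (fun n : Fin N => X n ω) ℓ)) : ℕ) : ℝ) / N
        ≤ b N := by
    intro N hN
    have hNpos : (0:ℝ) < N := by exact_mod_cast hN
    rw [hbdef, Nat.cast_sum, Finset.sum_div]
    apply Finset.sum_le_sum
    intro ℓ hℓ
    obtain ⟨hℓ1, hℓ2⟩ := Finset.mem_Ico.1 hℓ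
    have hMpos : (0:ℝ) < M ℓ := by exact_mod_cast hM1 ℓ hℓ1 hℓ2
    have hb1 := hbound ℓ hℓ1 hℓ2 N
    have hMne : (M ℓ : ℝ) ≠ 0 := ne_of_gt hMpos
    have hNne : (N:ℝ) ≠ 0 := ne_of_gt hNpos
    calc ((golombBits (M ℓ) (runLengths (supportList N (fun n : Fin N => X n ω) ℓ)) : ℕ) : ℝ) / N
        ≤ (((N:ℝ) - ∑ m ∈ Finset.Icc 1 ℓ, T m N) / M ℓ
            + T ℓ N * (2 + (Nat.log 2 (M ℓ) : ℝ))) / N := by gcongr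
      _ = (1 - ∑ m ∈ Finset.Icc 1 ℓ, T m N / N) / M ℓ
            + (T ℓ N / N) * (2 + (Nat.log 2 (M ℓ) : ℝ)) := by
          rw [← Finset.sum_div]
          field_simp
  have hbtend : Filter.Tendsto b Filter.atTop (nhds (∑ ℓ ∈ Finset.Ico 1 L,
      ((1 - ∑ m ∈ Finset.Icc 1 ℓ, f m) / M ℓ + f ℓ * (2 + (Nat.log 2 (M ℓ) : ℝ))))) := by
    rw [hbdef]
    apply tendsto_finset_sum
    intro ℓ hℓ
    obtain ⟨h1, h2⟩ := Finset.mem_Ico.1 hℓ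
    have ht1 : Filter.Tendsto (fun N : ℕ => ∑ m ∈ Finset.Icc 1 ℓ, T m N / N)
        Filter.atTop (nhds (∑ m ∈ Finset.Icc 1 ℓ, f m)) := by
      apply tendsto_finset_sum
      intro m hm
      exact hT m (lt_of_le_of_lt (Finset.mem_Icc.1 hm).2 h2)
    exact ((tendsto_const_nhds.sub ht1).div_const _).add ((hT ℓ h2).mul_const _)
  have hsum_le : (∑ ℓ ∈ Finset.Ico 1 L,
      ((1 - ∑ m ∈ Finset.Icc 1 ℓ, f m) / M ℓ + f ℓ * (2 + (Nat.log 2 (M ℓ) : ℝ))))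
      ≤ ∑ ℓ ∈ Finset.Ico 1 L,
        (f ℓ * Real.logb 2 ((1 - ∑ m ∈ Finset.Icc 1 ℓ, f m) + f ℓ)
          - f ℓ * Real.logb 2 (f ℓ) + 2.914 * f ℓ) := by
    apply Finset.sum_le_sum
    intro ℓ hℓ
    obtain ⟨h1, h2⟩ := Finset.mem_Ico.1 hℓ
    have hgt := golomb_term (hf ℓ h2) (hz ℓ h1 h2)
    simpa only [hMdef] using hgt
  have hqeq : ∀ ℓ ∈ Finset.Ico 1 L,
      (1 - ∑ m ∈ Finset.Icc 1 ℓ, f m) + f ℓ = 1 - ∑ m ∈ Finset.Ico 1 ℓ, f m := by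
    intro ℓ hℓ
    obtain ⟨h1, _⟩ := Finset.mem_Ico.1 hℓ
    have hsp : ∑ m ∈ Finset.Icc 1 ℓ, f m = ∑ m ∈ Finset.Ico 1 ℓ, f m + f ℓ := by
      rw [← Finset.Ico_add_one_right_eq_Icc, Finset.sum_Ico_succ_top h1]
    linarith
  have hsplit_logb : ∑ ℓ ∈ Finset.range L, f ℓ * Real.logb 2 (f ℓ)
      = f 0 * Real.logb 2 (f 0) + ∑ ℓ ∈ Finset.Ico 1 L, f ℓ * Real.logb 2 (f ℓ) := by
    rw [Finset.range_eq_Ico, Finset.sum_eq_sum_Ico_succ_bot hLpos]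
  have hBle : (∑ ℓ ∈ Finset.Ico 1 L,
      ((1 - ∑ m ∈ Finset.Icc 1 ℓ, f m) / M ℓ + f ℓ * (2 + (Nat.log 2 (M ℓ) : ℝ))))
      ≤ (-∑ ℓ ∈ Finset.range L, f ℓ * Real.logb 2 (f ℓ))
          + (2.914 * (1 - f 0) + f 0 * Real.logb 2 (f 0)
              + ∑ ℓ ∈ Finset.Ico 1 L,
                  f ℓ * Real.logb 2 (1 - ∑ m ∈ Finset.Ico 1 ℓ, f m)) := by
    refine hsum_le.trans ?_
    have he1 : ∑ ℓ ∈ Finset.Ico 1 L,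
        (f ℓ * Real.logb 2 ((1 - ∑ m ∈ Finset.Icc 1 ℓ, f m) + f ℓ)
          - f ℓ * Real.logb 2 (f ℓ) + 2.914 * f ℓ)
        = ∑ ℓ ∈ Finset.Ico 1 L,
        (f ℓ * Real.logb 2 (1 - ∑ m ∈ Finset.Ico 1 ℓ, f m)
          - f ℓ * Real.logb 2 (f ℓ) + 2.914 * f ℓ) := by
      apply Finset.sum_congr rfl
      intro ℓ hℓ
      rw [hqeq ℓ hℓ]
    rw [he1, Finset.sum_add_distrib, Finset.sum_sub_distrib, ← Finset.mul_sum, hIco,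
      hsplit_logb]
    ring_nf
    linarith
  have hnonneg : ∀ N : ℕ,
      0 ≤ ((∑ ℓ ∈ Finset.Ico 1 L,
        golombBits (M ℓ) (runLengths (supportList N (fun n : Fin N => X n ω) ℓ)) : ℕ) : ℝ) / N :=
    fun N => by positivity
  refine le_trans (Filter.limsup_le_limsup (Filter.eventually_atTop.2 ⟨1, hab⟩)
    (Filter.isCoboundedUnder_le_of_le Filter.atTop hnonneg) hbtend.isBoundedUnder_le) ?_
  rw [hbtend.limsup_eq]
  exact hBle
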